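/- The constructed instance I′ has a feasible solution if and only if the arrears instance is a yes-instance, i.e., there exist integers z_1,…,z_n with 1 ≤ z_i ≤ |S_i| such that Σ_{i : a_{i,z_i} ≤ b_j} p_{i,z_i} ≤ q_j for every j = 1,…,m. -/

import Mathlib

/-!
Given a feasible clustering, let `z i` be the least index `k` such that a middle user of leg `i`
at distance `2L - a i k` lies in a cluster without the end users of leg `i`; the innermost users,
at `2L - a i |S_i|`, are at distance `2L + 1` from the end users, so such `k` exists. That cluster
has at least `r` users, of which at most `r - p i (z i)` are middle users of leg `i` (those of
index at least `z i`); if `a i (z i) ≤ b j`, all the others lie on the first `q j` short legs,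
because every other user is farther than `a i (z i)` from the center; so at least `p i (z i)`
of its users lie on those short legs. Different legs give different clusters, so the payments
due by `b j` total at most `q j`.

Conversely, the budget constraints are exactly Hall's condition for assigning to every leg `i`
its own `p i (z i)` short legs of length at most `a i (z i)`. The clusters are then: for every
leg, the users beyond `2L - a i (z i)`; the remaining users of the leg together with its assigned
short legs; and one cluster made of the unassigned short legs and the `r` legs of length `L`.
-/

noncomputable local instance : DecidableEq ℝ := Classical.decEq ℝ

/-- The distance function on a spider with legs indexed by `Λ`. -/
noncomputable def spiderDist {Λ : Type*} [DecidableEq Λ] (P Q : Λ × ℝ) : ℝ :=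
  if P.1 = Q.1 then |P.2 - Q.2| else P.2 + Q.2

/-- An instance of the arrears problem: payment duties
`S i = {(a i 0, p i 0), …, (a i (sz i), p i (sz i))}` (so `|S i| = sz i + 1`),
with strictly increasing payment dates and amounts, and budget constraints
`(b j, q j)`, strictly increasing, all positive, with the last budget date
at least every payment date. -/
structure ArrearsInstance where
  n : ℕ
  m : ℕ
  npos : 0 < n
  mpos : 0 < m
  sz : Fin n → ℕ
  a : (i : Fin n) → Fin (sz i + 1) → ℕ
  p : (i : Fin n) → Fin (sz i + 1) → ℕ
  amono : ∀ i, StrictMono (a i)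
  pmono : ∀ i, StrictMono (p i)
  apos : ∀ i k, 0 < a i k
  ppos : ∀ i k, 0 < p i k
  b : Fin m → ℕ
  q : Fin m → ℕ
  bmono : StrictMono b
  qmono : StrictMono q
  bpos : ∀ j, 0 < b j
  qpos : ∀ j, 0 < q j
  hba : ∀ i k, a i k ≤ Finset.univ.sup b

namespace ArrearsInstance

variable (I : ArrearsInstance)

/-- `L = max(max_i a_{i,|S_i|}, b_m) + 1`. -/
def L : ℕ := ((Finset.univ.sup fun i => I.a i (Fin.last (I.sz i))) ⊔ Finset.univ.sup I.b) + 1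

/-- `r = max(max_i p_{i,|S_i|}, q_m) + 1`. -/
def r : ℕ := ((Finset.univ.sup fun i => I.p i (Fin.last (I.sz i))) ⊔ Finset.univ.sup I.q) + 1

/-- `q_{j-1}`, with `q_0 = 0`. -/
def qprev (j : Fin I.m) : ℕ :=
  if (j : ℕ) = 0 then 0 else I.q ⟨(j : ℕ) - 1, lt_of_le_of_lt (Nat.sub_le _ _) j.isLt⟩

/-- `b_{j-1}`, with `b_0 = 0`. -/
def bprev (j : Fin I.m) : ℕ :=
  if (j : ℕ) = 0 then 0 else I.b ⟨(j : ℕ) - 1, lt_of_le_of_lt (Nat.sub_le _ _) j.isLt⟩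

/-- The number `q j − q (j−1)` of short legs of length `b (j−1) + 1`. -/
def qdiff (j : Fin I.m) : ℕ := I.q j - I.qprev j

/-- The legs of the spider of the constructed instance `I′`: one long leg per payment
duty, `q j − q (j−1)` short legs of length `b (j−1) + 1` for every `j`, and `r` short
legs of length `L`. -/
def Leg : Type := Fin I.n ⊕ ((Σ j : Fin I.m, Fin (I.qdiff j)) ⊕ Fin I.r)

instance : DecidableEq I.Leg :=
  inferInstanceAs (DecidableEq (Fin I.n ⊕ ((Σ j : Fin I.m, Fin (I.qdiff j)) ⊕ Fin I.r)))

/-- The coordinate `4L − a_{i,|S_i|} + 1` of the farthest users on long leg `i`. -/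
def endCoord (i : Fin I.n) : ℝ := 4 * I.L - I.a i (Fin.last (I.sz i)) + 1

/-- The coordinate `2L − a_{i,|S_i|}` of the innermost users on long leg `i`. -/
def lastCoord (i : Fin I.n) : ℝ := 2 * I.L - I.a i (Fin.last (I.sz i))

/-- The farthest user on long leg `i`. -/
def endPt (i : Fin I.n) : I.Leg × ℝ := (Sum.inl i, I.endCoord i)

/-- The users on long leg `i`: `r` users at `4L − a_{i,|S_i|} + 1`, then
`p_{i,k+1} − p_{i,k}` users at `2L − a_{i,k}` for `k = 1, …, |S_i| − 1`, and
`r − p_{i,|S_i|}` users at `2L − a_{i,|S_i|}`. -/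
def longUsers (i : Fin I.n) : Multiset (I.Leg × ℝ) :=
  Multiset.replicate I.r (I.endPt i)
  + (Finset.univ : Finset (Fin (I.sz i))).val.bind (fun k =>
      Multiset.replicate (I.p i k.succ - I.p i k.castSucc)
        ((Sum.inl i, (2 * I.L - I.a i k.castSucc : ℝ)) : I.Leg × ℝ))
  + Multiset.replicate (I.r - I.p i (Fin.last (I.sz i)))
      ((Sum.inl i, I.lastCoord i) : I.Leg × ℝ)

/-- All users of the constructed instance `I′`: the users on the long legs, one user at
the tip of each short leg of length `b (j−1) + 1`, and one user at the tip of each of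
the `r` short legs of length `L`. -/
def users : Multiset (I.Leg × ℝ) :=
  (Finset.univ : Finset (Fin I.n)).val.bind I.longUsers
  + (Finset.univ : Finset (Σ j : Fin I.m, Fin (I.qdiff j))).val.map
      (fun s => ((Sum.inr (Sum.inl s), (I.bprev s.1 + 1 : ℝ)) : I.Leg × ℝ))
  + (Finset.univ : Finset (Fin I.r)).val.map
      (fun t => ((Sum.inr (Sum.inr t), (I.L : ℝ)) : I.Leg × ℝ))

/-- A feasible solution of `I′`: a partition of the users into clusters, each containing
at least `r` users and having diameter at most `2L`. -/
def Feasible (P : Multiset (Multiset (I.Leg × ℝ))) : Prop :=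
  P.sum = I.users ∧
  ∀ C ∈ P, I.r ≤ Multiset.card C ∧ ∀ x ∈ C, ∀ y ∈ C, spiderDist x y ≤ 2 * I.L

end ArrearsInstance

open Finset

theorem spiderDist_of_fst_eq {Λ : Type*} [DecidableEq Λ] {P Q : Λ × ℝ} (h : P.1 = Q.1) :
    spiderDist P Q = |P.2 - Q.2| :=
  if_pos h

theorem spiderDist_of_fst_ne {Λ : Type*} [DecidableEq Λ] {P Q : Λ × ℝ} (h : P.1 ≠ Q.1) :
    spiderDist P Q = P.2 + Q.2 :=
  if_neg h

theorem spiderDist_le_add {Λ : Type*} [DecidableEq Λ] {P Q : Λ × ℝ} (hP : 0 ≤ P.2)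
    (hQ : 0 ≤ Q.2) : spiderDist P Q ≤ P.2 + Q.2 := by
  unfold spiderDist
  split_ifs
  · exact abs_sub_le_iff.2 ⟨by linarith, by linarith⟩
  · exact le_rfl

theorem sum_Ico_tsub_of_monotone {M : Type*} [AddCommMonoid M] [PartialOrder M] [Sub M]
    [OrderedSub M] [AddLeftMono M] [AddLeftReflectLE M] [ExistsAddOfLE M]
    {f : ℕ → M} (hf : Monotone f) {lo hi : ℕ} (h : lo ≤ hi) :
    ∑ t ∈ Finset.Ico lo hi, (f (t + 1) - f t) = f hi - f lo := by
  rw [Finset.sum_Ico_eq_sum_range]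
  have := Finset.sum_range_tsub (f := fun t => f (lo + t)) (fun _ _ h => hf (by omega)) (hi - lo)
  simpa [Nat.add_sub_cancel' h, add_assoc] using this

theorem Fin.sum_filter_tsub_of_monotone {f : ℕ → ℕ} (hf : Monotone f) {N lo hi : ℕ}
    (h : lo ≤ hi) (hN : hi ≤ N) :
    ∑ k : Fin N with lo ≤ k.val ∧ k.val < hi, (f (k + 1) - f k) = f hi - f lo := by
  rw [Finset.sum_filter,
    Fin.sum_univ_eq_sum_range (fun t => if lo ≤ t ∧ t < hi then f (t + 1) - f t else 0),
    ← Finset.sum_filter, ← sum_Ico_tsub_of_monotone hf h]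
  congr 1
  ext t
  simp only [Finset.mem_filter, Finset.mem_range, Finset.mem_Ico]
  omega

theorem Finset.card_filter_sigma_fst {ι : Type*} [Fintype ι] {κ : ι → Type*}
    [∀ i, Fintype (κ i)] (c : ι → Prop) [DecidablePred c] :
    #{x : Σ i, κ i | c x.1} = ∑ i with c i, Fintype.card (κ i) := by
  have : ({x : Σ i, κ i | c x.1} : Finset _) = (univ.filter c).sigma fun _ => univ := by
    ext x; simp
  rw [this, Finset.card_sigma]
  rfl

theorem Multiset.card_le_sum_count {α ι : Type*} [DecidableEq α]
    {C : Multiset α} {K : Finset ι} {e : ι → α} (h : ∀ u ∈ C, ∃ k ∈ K, u = e k) :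
    card C ≤ ∑ k ∈ K, C.count (e k) := by
  calc card C = ∑ u ∈ K.image e, C.count u :=
        (Multiset.sum_count_eq_card fun u hu => by
          obtain ⟨k, hk, rfl⟩ := h u hu; exact Finset.mem_image_of_mem e hk).symm
    _ ≤ ∑ k ∈ K, C.count (e k) := Finset.sum_image_le_of_nonneg fun _ _ => Nat.zero_le _

theorem Multiset.card_eq_sum_count_of_injOn {α ι : Type*} [DecidableEq α]
    {C : Multiset α} {K : Finset ι} {e : ι → α} (he : Set.InjOn e K)
    (h : ∀ u ∈ C, ∃ k ∈ K, u = e k) :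
    card C = ∑ k ∈ K, C.count (e k) := by
  rw [← Finset.sum_image (f := fun u => C.count u) he]
  exact (Multiset.sum_count_eq_card fun u hu => by
    obtain ⟨k, hk, rfl⟩ := h u hu; exact Finset.mem_image_of_mem e hk).symm

theorem Finset.sum_comp_le_sum_map_of_injOn {ι α M : Type*} [AddCommMonoid M]
    [PartialOrder M] [CanonicallyOrderedAdd M] {s : Finset ι} {C : ι → α} {P : Multiset α}
    (hC : Set.InjOn C s) (hmem : ∀ i ∈ s, C i ∈ P) (g : α → M) :
    ∑ i ∈ s, g (C i) ≤ (P.map g).sum := by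
  classical
  have hle : (s.image C).val ≤ P := (Multiset.le_iff_subset (s.image C).nodup).2 fun c hc => by
    obtain ⟨i, hi, rfl⟩ := Finset.mem_image.1 hc; exact hmem i hi
  obtain ⟨Q, rfl⟩ := Multiset.le_iff_exists_add.1 hle
  rw [← Finset.sum_image hC, Multiset.map_add, Multiset.sum_add]
  exact le_self_add

theorem spiderDist_le_two_mul {Λ : Type*} [DecidableEq Λ] {l : Λ} {c D : ℝ} (hc : 0 ≤ c)
    (hcD : c ≤ D) {P Q : Λ × ℝ}
    (hP : (P.1 = l ∧ 0 ≤ P.2 ∧ P.2 ≤ 2 * D - c) ∨ (0 ≤ P.2 ∧ P.2 ≤ c))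
    (hQ : (Q.1 = l ∧ 0 ≤ Q.2 ∧ Q.2 ≤ 2 * D - c) ∨ (0 ≤ Q.2 ∧ Q.2 ≤ c)) :
    spiderDist P Q ≤ 2 * D := by
  rcases hP with ⟨hPl, hP0, hPc⟩ | ⟨hP0, hPc⟩ <;> rcases hQ with ⟨hQl, hQ0, hQc⟩ | ⟨hQ0, hQc⟩
  · rw [spiderDist_of_fst_eq (hPl.trans hQl.symm)]
    exact abs_sub_le_iff.2 ⟨by linarith, by linarith⟩
  all_goals exact (spiderDist_le_add hP0 hQ0).trans (by linarith)

namespace ArrearsInstance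

variable (I : ArrearsInstance)

abbrev ShortLeg : Type := Σ j : Fin I.m, Fin (I.qdiff j)

def midUser (i : Fin I.n) (k : Fin (I.sz i + 1)) : I.Leg × ℝ :=
  (Sum.inl i, (2 * I.L - I.a i k : ℝ))

def shortUser (s : I.ShortLeg) : I.Leg × ℝ := (Sum.inr (Sum.inl s), (I.bprev s.1 + 1 : ℝ))

def tipUser (t : Fin I.r) : I.Leg × ℝ := (Sum.inr (Sum.inr t), (I.L : ℝ))

lemma a_le_a_last (i : Fin I.n) (k : Fin (I.sz i + 1)) : I.a i k ≤ I.a i (Fin.last _) :=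
  (I.amono i).monotone (Fin.le_last k)

lemma a_last_lt_L (i : Fin I.n) : I.a i (Fin.last _) < I.L := by
  have : I.a i (Fin.last _) ≤ univ.sup fun i => I.a i (Fin.last (I.sz i)) :=
    le_sup (f := fun i => I.a i (Fin.last (I.sz i))) (mem_univ i)
  unfold L; omega

lemma a_lt_L (i : Fin I.n) (k : Fin (I.sz i + 1)) : I.a i k < I.L :=
  (I.a_le_a_last i k).trans_lt (I.a_last_lt_L i)

lemma b_lt_L (j : Fin I.m) : I.b j < I.L := by
  have : I.b j ≤ univ.sup I.b := le_sup (mem_univ j)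
  unfold L; omega

lemma bprev_lt_L (j : Fin I.m) : I.bprev j < I.L := by
  unfold bprev; split
  · unfold L; omega
  · exact I.b_lt_L _

lemma p_lt_r (i : Fin I.n) (k : Fin (I.sz i + 1)) : I.p i k < I.r := by
  have h1 : I.p i k ≤ I.p i (Fin.last _) := (I.pmono i).monotone (Fin.le_last k)
  have h2 : I.p i (Fin.last _) ≤ univ.sup fun i => I.p i (Fin.last (I.sz i)) :=
    le_sup (f := fun i => I.p i (Fin.last (I.sz i))) (mem_univ i)
  unfold r; omega

lemma q_lt_r (j : Fin I.m) : I.q j < I.r := by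
  have : I.q j ≤ univ.sup I.q := le_sup (mem_univ j)
  unfold r; omega

lemma a_le_b_of_forall_le {j : Fin I.m} (hj : ∀ j', j' ≤ j) (i : Fin I.n)
    (k : Fin (I.sz i + 1)) : I.a i k ≤ I.b j :=
  (I.hba i k).trans (Finset.sup_le fun j' _ => I.bmono.monotone (hj j'))

lemma bprev_of_val_eq_zero {j : Fin I.m} (hj : (j : ℕ) = 0) : I.bprev j = 0 := if_pos hj

lemma bprev_succ (j : Fin I.m) (h : (j : ℕ) + 1 < I.m) : I.bprev ⟨j + 1, h⟩ = I.b j := by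
  simp [bprev]

lemma b_le_bprev {j j' : Fin I.m} (h : j < j') : I.b j ≤ I.bprev j' := by
  have h' : (j : ℕ) < j' := h
  rw [bprev, if_neg (by omega)]
  exact I.bmono.monotone (Fin.mk_le_mk.2 (by omega))

lemma bprev_mono : Monotone I.bprev := by
  intro j j' h
  by_cases hj : (j : ℕ) = 0
  · rw [I.bprev_of_val_eq_zero hj]; exact Nat.zero_le _
  · have : I.bprev j = I.b ⟨j - 1, by omega⟩ := if_neg hj
    rw [this]
    exact I.b_le_bprev (Fin.mk_lt_mk.2 (by have : (j : ℕ) ≤ j' := h; omega))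

/-- `cumBudget t` is `q_t` in the paper's one-based numbering (`q_0 = 0`), extended by `r`. -/
def cumBudget (t : ℕ) : ℕ := if t = 0 then 0 else if h : t - 1 < I.m then I.q ⟨t - 1, h⟩ else I.r

lemma cumBudget_mono : Monotone I.cumBudget := by
  intro t t' h
  unfold cumBudget
  split_ifs <;> first
    | omega
    | exact I.qmono.monotone (Fin.mk_le_mk.2 (by omega))
    | exact (I.q_lt_r _).le

lemma cumBudget_succ (j : Fin I.m) : I.cumBudget (j + 1) = I.q j := by
  simp [cumBudget]

lemma qdiff_eq (j : Fin I.m) : I.qdiff j = I.cumBudget (j + 1) - I.cumBudget j := by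
  rw [qdiff, cumBudget_succ, qprev, cumBudget]
  split_ifs <;> first | rfl | omega

lemma card_shortLeg_fst_le (j : Fin I.m) : #{s : I.ShortLeg | s.1 ≤ j} = I.q j := by
  rw [card_filter_sigma_fst (fun j' => j' ≤ j)]
  calc ∑ j' with j' ≤ j, Fintype.card (Fin (I.qdiff j'))
      = ∑ j' : Fin I.m with 0 ≤ j'.val ∧ j'.val < j.val + 1,
          (I.cumBudget (j'.val + 1) - I.cumBudget j'.val) := by
        refine Finset.sum_congr ?_ fun j' _ => by rw [Fintype.card_fin, qdiff_eq]
        ext j'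
        simp only [mem_filter, mem_univ, true_and, Fin.le_def]
        omega
    _ = I.q j := by
        rw [Fin.sum_filter_tsub_of_monotone I.cumBudget_mono (Nat.zero_le _) j.isLt,
          cumBudget_succ, cumBudget, if_pos rfl, Nat.sub_zero]

/-- `payExt i t` is `p i t` for `t ≤ |S_i|` (zero-based), extended by `r`. -/
def payExt (i : Fin I.n) (t : ℕ) : ℕ := if h : t < I.sz i + 1 then I.p i ⟨t, h⟩ else I.r

lemma payExt_mono (i : Fin I.n) : Monotone (I.payExt i) := by
  intro t t' h
  unfold payExt
  split_ifs <;> first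
    | omega
    | exact (I.pmono i).monotone (Fin.mk_le_mk.2 (by omega))
    | exact (I.p_lt_r i _).le

lemma users_eq : I.users = univ.val.bind I.longUsers + univ.val.map I.shortUser
    + univ.val.map I.tipUser := rfl

lemma midUser_injective (i : Fin I.n) : Function.Injective (I.midUser i) := by
  intro k k' h
  have : (2 * I.L - I.a i k : ℝ) = 2 * I.L - I.a i k' := congrArg Prod.snd h
  exact (I.amono i).injective (by exact_mod_cast (sub_right_injective this))

lemma shortUser_injective : Function.Injective I.shortUser := by
  intro s s' h
  exact Sum.inl.inj (Sum.inr.inj (congrArg Prod.fst h))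

lemma endPt_ne_midUser (i : Fin I.n) (k : Fin (I.sz i + 1)) : I.endPt i ≠ I.midUser i k := by
  intro h
  have : (4 * I.L - I.a i (Fin.last _) + 1 : ℝ) = 2 * I.L - I.a i k := congrArg Prod.snd h
  have : (I.a i k : ℝ) < I.L := by exact_mod_cast I.a_lt_L i k
  have : (I.a i (Fin.last _) : ℝ) < I.L := by exact_mod_cast I.a_last_lt_L i
  linarith

lemma mem_longUsers {i : Fin I.n} {u : I.Leg × ℝ} (hu : u ∈ I.longUsers i) :
    u = I.endPt i ∨ ∃ k, u = I.midUser i k := by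
  simp only [longUsers, Multiset.mem_add, Multiset.mem_replicate, Multiset.mem_bind] at hu
  rcases hu with (⟨_, rfl⟩ | ⟨k, _, _, rfl⟩) | ⟨_, rfl⟩
  · exact Or.inl rfl
  · exact Or.inr ⟨k.castSucc, rfl⟩
  · exact Or.inr ⟨Fin.last _, rfl⟩

lemma mem_users {u : I.Leg × ℝ} (hu : u ∈ I.users) :
    (∃ i, u = I.endPt i) ∨ (∃ i k, u = I.midUser i k) ∨ (∃ s, u = I.shortUser s) ∨
      ∃ t, u = I.tipUser t := by
  simp only [users_eq, Multiset.mem_add, Multiset.mem_bind, Multiset.mem_map] at hu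
  rcases hu with (⟨i, _, hu⟩ | ⟨s, _, rfl⟩) | ⟨t, _, rfl⟩
  · rcases I.mem_longUsers hu with rfl | ⟨k, rfl⟩
    exacts [Or.inl ⟨i, rfl⟩, Or.inr (Or.inl ⟨i, k, rfl⟩)]
  · exact Or.inr (Or.inr (Or.inl ⟨s, rfl⟩))
  · exact Or.inr (Or.inr (Or.inr ⟨t, rfl⟩))

lemma count_midUser_longUsers (i : Fin I.n) (k : Fin (I.sz i + 1)) :
    (I.longUsers i).count (I.midUser i k) = I.payExt i (k + 1) - I.payExt i k := by
  have hmid : ∀ k' : Fin (I.sz i),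
      ((Sum.inl i, (2 * I.L - I.a i k'.castSucc : ℝ)) : I.Leg × ℝ) = I.midUser i k'.castSucc :=
    fun _ => rfl
  have hlast : ((Sum.inl i, I.lastCoord i) : I.Leg × ℝ) = I.midUser i (Fin.last _) := rfl
  simp only [longUsers, Multiset.count_add, Multiset.count_replicate, Multiset.count_bind,
    hmid, hlast, (I.midUser_injective i).eq_iff, if_neg (I.endPt_ne_midUser i k)]
  induction k using Fin.lastCases with
  | last =>
    change 0 + ∑ k', _ + _ = _
    simp only [Fin.castSucc_ne_last, if_false, sum_const_zero, if_true, zero_add, payExt,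
      Fin.val_last, dif_neg (lt_irrefl _), dif_pos (Nat.lt_succ_self _)]
    rfl
  | cast k =>
    change 0 + ∑ k', _ + _ = _
    simp only [Fin.castSucc_inj, sum_ite_eq', mem_univ, if_true,
      if_neg (Fin.castSucc_lt_last k).ne', payExt, Fin.val_castSucc, zero_add, add_zero]
    rw [dif_pos (by omega), dif_pos (by omega)]
    rfl

lemma fst_of_mem_longUsers {i : Fin I.n} {u : I.Leg × ℝ} (hu : u ∈ I.longUsers i) :
    u.1 = Sum.inl i := by
  rcases I.mem_longUsers hu with rfl | ⟨k, rfl⟩ <;> rfl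

lemma count_midUser_users (i : Fin I.n) (k : Fin (I.sz i + 1)) :
    I.users.count (I.midUser i k) = (I.longUsers i).count (I.midUser i k) := by
  have hshort : I.midUser i k ∉ univ.val.map I.shortUser := by
    simp only [Multiset.mem_map]
    rintro ⟨s, _, h⟩
    exact Sum.inr_ne_inl (congrArg Prod.fst h)
  have htip : I.midUser i k ∉ univ.val.map I.tipUser := by
    simp only [Multiset.mem_map]
    rintro ⟨t, _, h⟩
    exact Sum.inr_ne_inl (congrArg Prod.fst h)
  rw [users_eq, Multiset.count_add, Multiset.count_add, Multiset.count_eq_zero.2 hshort,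
    Multiset.count_eq_zero.2 htip, Multiset.count_bind, add_zero, add_zero]
  refine Finset.sum_eq_single i (fun i' _ hi' => Multiset.count_eq_zero.2 fun h => hi' ?_)
    (by simp)
  exact (Sum.inl.inj (I.fst_of_mem_longUsers h)).symm

lemma sum_count_midUser_longUsers (i : Fin I.n) (z : Fin (I.sz i + 1)) :
    ∑ k with z ≤ k, (I.longUsers i).count (I.midUser i k) = I.r - I.p i z := by
  calc ∑ k with z ≤ k, (I.longUsers i).count (I.midUser i k)
      = ∑ k : Fin (I.sz i + 1) with z.val ≤ k.val ∧ k.val < I.sz i + 1,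
          (I.payExt i (k.val + 1) - I.payExt i k.val) := by
        refine Finset.sum_congr ?_ fun k _ => I.count_midUser_longUsers i k
        ext k
        simp only [mem_filter, mem_univ, true_and, Fin.le_def, k.isLt, and_true]
    _ = I.r - I.p i z := by
        rw [Fin.sum_filter_tsub_of_monotone (I.payExt_mono i) (by omega) le_rfl]
        simp only [payExt, dif_pos z.isLt, dif_neg (lt_irrefl _)]

lemma count_shortUser_users (s : I.ShortLeg) : I.users.count (I.shortUser s) = 1 := by
  have hlong : I.shortUser s ∉ univ.val.bind I.longUsers := by
    simp only [Multiset.mem_bind]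
    rintro ⟨i, _, h⟩
    exact Sum.inr_ne_inl (I.fst_of_mem_longUsers h)
  have htip : I.shortUser s ∉ univ.val.map I.tipUser := by
    simp only [Multiset.mem_map]
    rintro ⟨t, _, h⟩
    exact Sum.inl_ne_inr (Sum.inr.inj (congrArg Prod.fst h)).symm
  rw [users_eq, Multiset.count_add, Multiset.count_add, Multiset.count_eq_zero.2 hlong,
    Multiset.count_eq_zero.2 htip, Multiset.count_map_eq_count' _ _ I.shortUser_injective]
  simp

section Feasible

variable {I} {P : Multiset (Multiset (I.Leg × ℝ))} {C : Multiset (I.Leg × ℝ)}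

lemma mem_users_of_mem_cluster (hP : I.Feasible P) (hC : C ∈ P) {u : I.Leg × ℝ} (hu : u ∈ C) :
    u ∈ I.users :=
  hP.1 ▸ Multiset.mem_join.2 ⟨C, hC, hu⟩

lemma endPt_not_mem_of_midUser_last_mem (hP : I.Feasible P) (hC : C ∈ P) {i : Fin I.n}
    (h : I.midUser i (Fin.last _) ∈ C) : I.endPt i ∉ C := by
  intro hend
  have hd := (hP.2 C hC).2 _ hend _ h
  rw [spiderDist_of_fst_eq (P := I.endPt i) (Q := I.midUser i (Fin.last _)) rfl] at hd
  have : (1 : ℝ) ≤ I.L := by exact_mod_cast Nat.le_add_left 1 _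
  simp only [endPt, endCoord, midUser] at hd
  rw [abs_of_nonneg (by linarith)] at hd
  linarith

lemma leg_eq_of_midUser_mem (hP : I.Feasible P) (hC : C ∈ P) {i i' : Fin I.n}
    {k : Fin (I.sz i + 1)} {k' : Fin (I.sz i' + 1)} (h : I.midUser i k ∈ C)
    (h' : I.midUser i' k' ∈ C) : i = i' := by
  by_contra hne
  have hd := (hP.2 C hC).2 _ h _ h'
  rw [spiderDist_of_fst_ne fun h => hne (Sum.inl.inj h)] at hd
  have : (I.a i k : ℝ) < I.L := by exact_mod_cast I.a_lt_L i k
  have : (I.a i' k' : ℝ) < I.L := by exact_mod_cast I.a_lt_L i' k'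
  simp only [midUser] at hd
  linarith

/-- Every user off leg `i`, except those on the first `q j` short legs, is farther than
`a i k ≤ b j` from the center. -/
lemma mem_cluster_of_midUser_mem (hP : I.Feasible P) (hC : C ∈ P) {i : Fin I.n}
    {k : Fin (I.sz i + 1)} {j : Fin I.m} (hk : I.midUser i k ∈ C) (hend : I.endPt i ∉ C)
    (hab : I.a i k ≤ I.b j) {u : I.Leg × ℝ} (hu : u ∈ C) :
    (∃ k', u = I.midUser i k') ∨ ∃ s : I.ShortLeg, s.1 ≤ j ∧ u = I.shortUser s := by
  have hd := (hP.2 C hC).2 _ hu _ hk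
  have hak : (I.a i k : ℝ) < I.L := by exact_mod_cast I.a_lt_L i k
  rcases I.mem_users (mem_users_of_mem_cluster hP hC hu) with
    ⟨i', rfl⟩ | ⟨i', k', rfl⟩ | ⟨s, rfl⟩ | ⟨t, rfl⟩
  · obtain rfl | hne := eq_or_ne i' i
    · exact absurd hu hend
    rw [spiderDist_of_fst_ne fun h => hne (Sum.inl.inj h)] at hd
    have : (I.a i' (Fin.last _) : ℝ) < I.L := by exact_mod_cast I.a_last_lt_L i'
    simp only [endPt, endCoord, midUser] at hd
    linarith
  · obtain rfl | hne := eq_or_ne i' i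
    · exact Or.inl ⟨k', rfl⟩
    rw [spiderDist_of_fst_ne fun h => hne (Sum.inl.inj h)] at hd
    have : (I.a i' k' : ℝ) < I.L := by exact_mod_cast I.a_lt_L i' k'
    simp only [midUser] at hd
    linarith
  · refine Or.inr ⟨s, not_lt.1 fun hjs => ?_, rfl⟩
    rw [spiderDist_of_fst_ne Sum.inr_ne_inl] at hd
    have : (I.b j : ℝ) ≤ I.bprev s.1 := by exact_mod_cast I.b_le_bprev hjs
    have : (I.a i k : ℝ) ≤ I.b j := by exact_mod_cast hab
    simp only [shortUser, midUser] at hd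
    linarith
  · rw [spiderDist_of_fst_ne Sum.inr_ne_inl] at hd
    simp only [tipUser, midUser] at hd
    linarith

lemma p_le_sum_count_shortUser (hP : I.Feasible P) (hC : C ∈ P) {i : Fin I.n}
    {z : Fin (I.sz i + 1)} {j : Fin I.m} (hz : I.midUser i z ∈ C) (hend : I.endPt i ∉ C)
    (hmin : ∀ k, I.midUser i k ∈ C → z ≤ k) (hab : I.a i z ≤ I.b j) :
    I.p i z ≤ ∑ s : I.ShortLeg with s.1 ≤ j, C.count (I.shortUser s) := by
  have hcard : I.r ≤ Multiset.card C := (hP.2 C hC).1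
  have hsplit : Multiset.card C ≤
      ∑ k, C.count (I.midUser i k) + ∑ s : I.ShortLeg with s.1 ≤ j, C.count (I.shortUser s) := by
    have := Multiset.card_le_sum_count (K := univ.disjSum {s : I.ShortLeg | s.1 ≤ j})
      (e := Sum.elim (I.midUser i) I.shortUser) fun u hu => by
        rcases mem_cluster_of_midUser_mem hP hC hz hend hab hu with ⟨k, rfl⟩ | ⟨s, hs, rfl⟩
        · exact ⟨Sum.inl k, by simp, rfl⟩
        · exact ⟨Sum.inr s, by simpa using hs, rfl⟩
    rwa [Finset.sum_disjSum] at this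
  have hmid : ∑ k, C.count (I.midUser i k) ≤ I.r - I.p i z :=
    calc ∑ k, C.count (I.midUser i k) = ∑ k with z ≤ k, C.count (I.midUser i k) :=
          (Finset.sum_filter_of_ne fun k _ hk => hmin k (Multiset.count_ne_zero.1 hk)).symm
      _ ≤ ∑ k with z ≤ k, I.users.count (I.midUser i k) :=
          Finset.sum_le_sum fun k _ =>
            Multiset.count_le_of_le _ (hP.1 ▸ Multiset.le_sum_of_mem hC)
      _ = I.r - I.p i z := by
          simp only [I.count_midUser_users, I.sum_count_midUser_longUsers]
  have := I.p_lt_r i z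
  omega

lemma exists_least_midUser_apart_from_endPt (hP : I.Feasible P) (i : Fin I.n) :
    ∃ z : Fin (I.sz i + 1), ∃ C ∈ P, I.endPt i ∉ C ∧ I.midUser i z ∈ C ∧
      ∀ C' ∈ P, I.endPt i ∉ C' → ∀ k, I.midUser i k ∈ C' → z ≤ k := by
  have hlast : I.midUser i (Fin.last _) ∈ I.users := by
    rw [← Multiset.count_pos, count_midUser_users, count_midUser_longUsers]
    have := I.p_lt_r i (Fin.last _)
    simp only [payExt, Fin.val_last, lt_irrefl, dif_neg, not_false_eq_true, lt_add_one, dif_pos]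
    exact Nat.sub_pos_of_lt this
  obtain ⟨C, hC, hmem⟩ := Multiset.mem_join.1 (hP.1.symm ▸ hlast)
  obtain ⟨z, ⟨C, hC, hend, hz⟩, hmin⟩ := wellFounded_lt.has_min
    {k | ∃ C ∈ P, I.endPt i ∉ C ∧ I.midUser i k ∈ C}
    ⟨_, C, hC, endPt_not_mem_of_midUser_last_mem hP hC hmem, hmem⟩
  exact ⟨z, C, hC, hend, hz, fun C' hC' hend' k hk => not_lt.1 (hmin k ⟨C', hC', hend', hk⟩)⟩

lemma sum_count_shortUser_eq_q (hP : I.Feasible P) (j : Fin I.m) :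
    (P.map fun C => ∑ s : I.ShortLeg with s.1 ≤ j, C.count (I.shortUser s)).sum = I.q j := by
  have hcount (u : I.Leg × ℝ) : (P.map fun C => C.count u).sum = I.users.count u := by
    rw [← hP.1]
    simpa using (Multiset.count_sum (m := P) (f := id) (a := u)).symm
  simp only [Multiset.sum_map_sum, hcount, count_shortUser_users, sum_const, smul_eq_mul, mul_one,
    card_shortLeg_fst_le]

lemma yes_of_feasible (hP : I.Feasible P) :
    ∃ z : (i : Fin I.n) → Fin (I.sz i + 1), ∀ j : Fin I.m,
      (∑ i : Fin I.n, if I.a i (z i) ≤ I.b j then I.p i (z i) else 0) ≤ I.q j := by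
  choose z C hCP hend hzC hmin using exists_least_midUser_apart_from_endPt hP
  refine ⟨z, fun j => ?_⟩
  rw [← Finset.sum_filter, ← sum_count_shortUser_eq_q hP j]
  refine (Finset.sum_le_sum fun i hi => p_le_sum_count_shortUser hP (hCP i) (hzC i) (hend i)
    (hmin i (C i) (hCP i) (hend i)) (Finset.mem_filter.1 hi).2).trans ?_
  exact Finset.sum_comp_le_sum_map_of_injOn (M := ℕ) (C := C)
    (fun i _ i' _ h => leg_eq_of_midUser_mem hP (hCP i) (hzC i) (by rw [h]; exact hzC i'))
    (fun i _ => hCP i) (fun C => ∑ s : I.ShortLeg with s.1 ≤ j, C.count (I.shortUser s))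

end Feasible

section Solution

variable (z : (i : Fin I.n) → Fin (I.sz i + 1))

lemma sum_pay_le_card_shortLeg
    (hyes : ∀ j : Fin I.m,
      (∑ i : Fin I.n, if I.a i (z i) ≤ I.b j then I.p i (z i) else 0) ≤ I.q j)
    {v : ℕ} (hv : 0 < v) :
    ∑ i with I.a i (z i) ≤ v, I.p i (z i) ≤ #{s : I.ShortLeg | I.bprev s.1 < v} := by
  have h0 : (⟨0, I.mpos⟩ : Fin I.m) ∈ ({j | I.bprev j < v} : Finset (Fin I.m)) := by
    simpa [I.bprev_of_val_eq_zero] using hv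
  set jh := ({j | I.bprev j < v} : Finset (Fin I.m)).max' ⟨_, h0⟩
  have hjh (j : Fin I.m) : I.bprev j < v ↔ j ≤ jh :=
    ⟨fun h => le_max' _ j (by simpa using h),
      fun h => (I.bprev_mono h).trans_lt (by simpa using max'_mem _ ⟨_, h0⟩)⟩
  have hcover (i : Fin I.n) (hi : I.a i (z i) ≤ v) : I.a i (z i) ≤ I.b jh := by
    by_cases hlast : (jh : ℕ) + 1 < I.m
    · have : ¬ I.bprev ⟨jh + 1, hlast⟩ < v := fun h =>
        not_le.2 (Fin.lt_def.2 (Nat.lt_succ_self _)) ((hjh _).1 h)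
      rw [I.bprev_succ jh hlast] at this
      omega
    · exact I.a_le_b_of_forall_le (fun j => Fin.le_def.2 (by omega)) i (z i)
  calc ∑ i with I.a i (z i) ≤ v, I.p i (z i) ≤ ∑ i with I.a i (z i) ≤ I.b jh, I.p i (z i) :=
        sum_le_sum_of_subset (monotone_filter_right _ fun i _ => hcover i)
    _ ≤ I.q jh := by rw [sum_filter]; exact hyes jh
    _ = #{s : I.ShortLeg | I.bprev s.1 < v} := by simp only [hjh, card_shortLeg_fst_le]

/-- Hall's condition for a set of payment units is the budget constraint at the latest of their
dates `a i (z i)`. -/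
lemma exists_injective_shortLeg_assignment
    (hyes : ∀ j : Fin I.m,
      (∑ i : Fin I.n, if I.a i (z i) ≤ I.b j then I.p i (z i) else 0) ≤ I.q j) :
    ∃ f : (Σ i, Fin (I.p i (z i))) → I.ShortLeg,
      Function.Injective f ∧ ∀ x, I.bprev (f x).1 < I.a x.1 (z x.1) := by
  let t (x : Σ i, Fin (I.p i (z i))) : Finset I.ShortLeg := {s | I.bprev s.1 < I.a x.1 (z x.1)}
  suffices hall : ∀ A : Finset (Σ i, Fin (I.p i (z i))), #A ≤ #(A.biUnion t) by
    obtain ⟨f, hf, hft⟩ := (all_card_le_biUnion_card_iff_exists_injective t).1 hall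
    exact ⟨f, hf, fun x => by simpa [t] using hft x⟩
  intro A
  rcases A.eq_empty_or_nonempty with rfl | hA
  · simp
  obtain ⟨x₀, hx₀, hmax⟩ := A.exists_max_image (fun x => I.a x.1 (z x.1)) hA
  calc #A ≤ #{x : Σ i, Fin (I.p i (z i)) | I.a x.1 (z x.1) ≤ I.a x₀.1 (z x₀.1)} :=
        card_le_card fun x hx => by simpa using hmax x hx
    _ = ∑ i with I.a i (z i) ≤ I.a x₀.1 (z x₀.1), I.p i (z i) := by
        rw [card_filter_sigma_fst (fun i => I.a i (z i) ≤ I.a x₀.1 (z x₀.1))]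
        simp
    _ ≤ #(t x₀) := I.sum_pay_le_card_shortLeg z hyes (I.apos _ _)
    _ ≤ #(A.biUnion t) := card_le_card (subset_biUnion_of_mem t hx₀)

lemma lt_snd_midUser_iff (i : Fin I.n) (k k' : Fin (I.sz i + 1)) :
    (2 * I.L - I.a i k' : ℝ) < (I.midUser i k).2 ↔ k < k' := by
  simp only [midUser, sub_lt_sub_iff_left, Nat.cast_lt, (I.amono i).lt_iff_lt]

lemma snd_endPt_gt (i : Fin I.n) (k : Fin (I.sz i + 1)) :
    (2 * I.L - I.a i k : ℝ) < (I.endPt i).2 := by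
  have : (I.a i (Fin.last _) : ℝ) < I.L := by exact_mod_cast I.a_last_lt_L i
  have : (0 : ℝ) ≤ I.a i k := Nat.cast_nonneg _
  simp only [endPt, endCoord]
  linarith

/-- The end users of leg `i` and its middle users of index below `z i`. -/
noncomputable def endCluster (i : Fin I.n) : Multiset (I.Leg × ℝ) :=
  (I.longUsers i).filter fun u => (2 * I.L - I.a i (z i) : ℝ) < u.2

noncomputable def innerUsers (i : Fin I.n) : Multiset (I.Leg × ℝ) :=
  (I.longUsers i).filter fun u => ¬ (2 * I.L - I.a i (z i) : ℝ) < u.2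

lemma endCluster_add_innerUsers (i : Fin I.n) :
    I.endCluster z i + I.innerUsers z i = I.longUsers i :=
  Multiset.filter_add_not _ _

lemma card_endCluster (i : Fin I.n) : I.r ≤ Multiset.card (I.endCluster z i) := by
  have : Multiset.replicate I.r (I.endPt i) ≤ I.endCluster z i :=
    Multiset.le_filter.2 ⟨le_add_right (le_add_right le_rfl), fun u hu => by
      rw [Multiset.eq_of_mem_replicate hu]; exact I.snd_endPt_gt i (z i)⟩
  simpa using Multiset.card_le_card this

lemma mem_innerUsers {i : Fin I.n} {u : I.Leg × ℝ} (hu : u ∈ I.innerUsers z i) :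
    ∃ k, z i ≤ k ∧ u = I.midUser i k := by
  obtain ⟨hu, hlt⟩ := Multiset.mem_filter.1 hu
  rcases I.mem_longUsers hu with rfl | ⟨k, rfl⟩
  · exact absurd (I.snd_endPt_gt i (z i)) hlt
  · exact ⟨k, not_lt.1 fun h => hlt ((I.lt_snd_midUser_iff i k (z i)).2 h), rfl⟩

lemma card_innerUsers (i : Fin I.n) :
    Multiset.card (I.innerUsers z i) = I.r - I.p i (z i) := by
  rw [Multiset.card_eq_sum_count_of_injOn (K := {k | z i ≤ k})
    ((I.midUser_injective i).injOn) fun u hu => by simpa using I.mem_innerUsers z hu,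
    ← I.sum_count_midUser_longUsers i (z i)]
  refine Finset.sum_congr rfl fun k hk => Multiset.count_filter_of_pos ?_
  rw [I.lt_snd_midUser_iff]
  exact not_lt.2 (Finset.mem_filter.1 hk).2

lemma spiderDist_le_of_mem_endCluster {i : Fin I.n} {u v : I.Leg × ℝ}
    (hu : u ∈ I.endCluster z i) (hv : v ∈ I.endCluster z i) : spiderDist u v ≤ 2 * I.L := by
  have hA : (I.a i (Fin.last _) : ℝ) < I.L := by exact_mod_cast I.a_last_lt_L i
  have bounds {w : I.Leg × ℝ} (hw : w ∈ I.endCluster z i) :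
      w.1 = Sum.inl i ∧ (2 * I.L - I.a i (Fin.last _) + 1 : ℝ) ≤ w.2 ∧
        w.2 ≤ 4 * I.L - I.a i (Fin.last _) + 1 := by
    obtain ⟨hw, hlt⟩ := Multiset.mem_filter.1 hw
    refine ⟨I.fst_of_mem_longUsers hw, ?_⟩
    rcases I.mem_longUsers hw with rfl | ⟨k, rfl⟩
    · simp only [endPt, endCoord]
      constructor <;> linarith
    · have hk : I.a i k + 1 ≤ I.a i (Fin.last _) :=
        ((I.amono i) ((I.lt_snd_midUser_iff i k (z i)).1 hlt)).trans_le (I.a_le_a_last i _)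
      have hk' : (I.a i k : ℝ) + 1 ≤ I.a i (Fin.last _) := by exact_mod_cast hk
      have : (0 : ℝ) ≤ I.a i k := Nat.cast_nonneg _
      simp only [midUser]
      constructor <;> linarith
  obtain ⟨hu1, hu2, hu3⟩ := bounds hu
  obtain ⟨hv1, hv2, hv3⟩ := bounds hv
  rw [spiderDist_of_fst_eq (hu1.trans hv1.symm)]
  exact abs_sub_le_iff.2 ⟨by linarith, by linarith⟩

variable (f : (Σ i, Fin (I.p i (z i))) → I.ShortLeg)

noncomputable def shortOwner (s : I.ShortLeg) : Option (Fin I.n) :=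
  (Function.partialInv f s).map Sigma.fst

noncomputable def assignedShortUsers (o : Option (Fin I.n)) : Multiset (I.Leg × ℝ) :=
  ∑ s with I.shortOwner z f s = o, {I.shortUser s}

lemma mem_assignedShortUsers {o : Option (Fin I.n)} {u : I.Leg × ℝ}
    (hu : u ∈ I.assignedShortUsers z f o) : ∃ s, I.shortOwner z f s = o ∧ u = I.shortUser s := by
  obtain ⟨s, hs, hu⟩ := Multiset.mem_sum.1 hu
  exact ⟨s, (Finset.mem_filter.1 hs).2, Multiset.mem_singleton.1 hu⟩

lemma sum_assignedShortUsers : ∑ o, I.assignedShortUsers z f o = univ.val.map I.shortUser := by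
  simp only [assignedShortUsers]
  rw [sum_fiberwise, ← Multiset.sum_map_singleton (univ.val.map _), Multiset.map_map]
  rfl

lemma card_assignedShortUsers (hf : Function.Injective f) (i : Fin I.n) :
    I.p i (z i) ≤ Multiset.card (I.assignedShortUsers z f (some i)) := by
  have hcard : Multiset.card (I.assignedShortUsers z f (some i)) =
      #{s | I.shortOwner z f s = some i} := by
    simp [assignedShortUsers]
  rw [hcard]
  simpa using card_le_card_of_injOn (s := univ) (fun t : Fin (I.p i (z i)) => f ⟨i, t⟩)
    (fun t _ => by simp [shortOwner, Function.partialInv_left hf])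
    (fun t _ t' _ h => by simpa using hf h)

lemma bprev_lt_of_shortOwner_eq_some (hf : Function.Injective f)
    (hfa : ∀ x, I.bprev (f x).1 < I.a x.1 (z x.1)) {s : I.ShortLeg} {i : Fin I.n}
    (h : I.shortOwner z f s = some i) : I.bprev s.1 < I.a i (z i) := by
  obtain ⟨x, hx, rfl⟩ := Option.map_eq_some_iff.1 h
  rw [← hf.isPartialInv _ _ |>.1 hx]
  exact hfa x

noncomputable def midCluster (i : Fin I.n) : Multiset (I.Leg × ℝ) :=
  I.innerUsers z i + I.assignedShortUsers z f (some i)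

noncomputable def tipCluster : Multiset (I.Leg × ℝ) :=
  I.assignedShortUsers z f none + univ.val.map I.tipUser

noncomputable def solution : Multiset (Multiset (I.Leg × ℝ)) :=
  univ.val.map (I.endCluster z) + univ.val.map (I.midCluster z f) + {I.tipCluster z f}

lemma sum_solution : (I.solution z f).sum = I.users := by
  have hlong : univ.val.bind I.longUsers = ∑ i, I.longUsers i := rfl
  rw [solution, Multiset.sum_add, Multiset.sum_add, Multiset.sum_singleton]
  change ∑ i, I.endCluster z i + ∑ i, I.midCluster z f i + I.tipCluster z f = _
  rw [users_eq, hlong, ← sum_assignedShortUsers, Fintype.sum_option]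
  simp only [midCluster, tipCluster, sum_add_distrib, ← I.endCluster_add_innerUsers z]
  abel

lemma card_midCluster (hf : Function.Injective f) (i : Fin I.n) :
    I.r ≤ Multiset.card (I.midCluster z f i) := by
  rw [midCluster, Multiset.card_add, card_innerUsers]
  have := I.card_assignedShortUsers z f hf i
  have := I.p_lt_r i (z i)
  omega

lemma spiderDist_le_of_mem_midCluster (hf : Function.Injective f)
    (hfa : ∀ x, I.bprev (f x).1 < I.a x.1 (z x.1)) {i : Fin I.n} {u v : I.Leg × ℝ}
    (hu : u ∈ I.midCluster z f i) (hv : v ∈ I.midCluster z f i) : spiderDist u v ≤ 2 * I.L := by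
  have hz : (I.a i (z i) : ℝ) < I.L := by exact_mod_cast I.a_lt_L i (z i)
  have near {w : I.Leg × ℝ} (hw : w ∈ I.midCluster z f i) :
      (w.1 = Sum.inl i ∧ 0 ≤ w.2 ∧ w.2 ≤ 2 * I.L - I.a i (z i)) ∨
        (0 ≤ w.2 ∧ w.2 ≤ I.a i (z i)) := by
    rcases Multiset.mem_add.1 hw with hw | hw
    · obtain ⟨k, hk, rfl⟩ := I.mem_innerUsers z hw
      have : (I.a i k : ℝ) < I.L := by exact_mod_cast I.a_lt_L i k
      have : (I.a i (z i) : ℝ) ≤ I.a i k := by exact_mod_cast (I.amono i).monotone hk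
      refine Or.inl ⟨rfl, ?_, ?_⟩ <;> simp only [midUser] <;> linarith
    · obtain ⟨s, hs, rfl⟩ := I.mem_assignedShortUsers z f hw
      have : I.bprev s.1 + 1 ≤ I.a i (z i) := I.bprev_lt_of_shortOwner_eq_some z f hf hfa hs
      simp only [shortUser]
      exact Or.inr ⟨by positivity, by exact_mod_cast this⟩
  exact spiderDist_le_two_mul (Nat.cast_nonneg _) hz.le (near hu) (near hv)

lemma spiderDist_le_of_mem_tipCluster {u v : I.Leg × ℝ} (hu : u ∈ I.tipCluster z f)
    (hv : v ∈ I.tipCluster z f) : spiderDist u v ≤ 2 * I.L := by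
  have near {w : I.Leg × ℝ} (hw : w ∈ I.tipCluster z f) : 0 ≤ w.2 ∧ w.2 ≤ I.L := by
    rcases Multiset.mem_add.1 hw with hw | hw
    · obtain ⟨s, -, rfl⟩ := I.mem_assignedShortUsers z f hw
      have : I.bprev s.1 + 1 ≤ I.L := I.bprev_lt_L s.1
      simp only [shortUser]
      exact ⟨by positivity, by exact_mod_cast this⟩
    · obtain ⟨t, -, rfl⟩ := Multiset.mem_map.1 hw
      exact ⟨Nat.cast_nonneg _, le_rfl⟩
  obtain ⟨hu0, hu1⟩ := near hu
  obtain ⟨hv0, hv1⟩ := near hv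
  exact (spiderDist_le_add hu0 hv0).trans (by linarith)

lemma feasible_solution (hf : Function.Injective f)
    (hfa : ∀ x, I.bprev (f x).1 < I.a x.1 (z x.1)) : I.Feasible (I.solution z f) := by
  refine ⟨I.sum_solution z f, fun C hC => ?_⟩
  simp only [solution, Multiset.mem_add, Multiset.mem_map, Multiset.mem_singleton] at hC
  rcases hC with (⟨i, -, rfl⟩ | ⟨i, -, rfl⟩) | rfl
  · exact ⟨I.card_endCluster z i, fun u hu v hv => I.spiderDist_le_of_mem_endCluster z hu hv⟩
  · exact ⟨I.card_midCluster z f hf i,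
      fun u hu v hv => I.spiderDist_le_of_mem_midCluster z f hf hfa hu hv⟩
  · refine ⟨?_, fun u hu v hv => I.spiderDist_le_of_mem_tipCluster z f hu hv⟩
    simp [tipCluster]

end Solution

end ArrearsInstance

/-- The constructed instance `I′` has a feasible solution if and only if the arrears
instance is a yes-instance: there is a choice `z i` of an option from every payment duty
`S i` such that, for every budget constraint `j`, the total amount of the chosen payments
due by day `b j` is at most `q j`. -/
theorem feasible_iff_arrears_yes (I : ArrearsInstance) :
    (∃ P : Multiset (Multiset (I.Leg × ℝ)), I.Feasible P) ↔
    (∃ z : (i : Fin I.n) → Fin (I.sz i + 1),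
      ∀ j : Fin I.m,
        (∑ i : Fin I.n, if I.a i (z i) ≤ I.b j then I.p i (z i) else 0) ≤ I.q j) := by
  refine ⟨fun ⟨P, hP⟩ => ArrearsInstance.yes_of_feasible hP, fun ⟨z, hyes⟩ => ?_⟩
  obtain ⟨f, hf, hfa⟩ := I.exists_injective_shortLeg_assignment z hyes
  exact ⟨I.solution z f, I.feasible_solution z f hf hfa⟩
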